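/- arXiv:math/0610053 — 5 statements merged into one kernel-verified Lean document; each statement's English description precedes it below -/
import Mathlib

section
/- Let F be a family of subsets of a set X with |F| ≥ 2, and for each x ∈ ∪F \ ∩F define transformations γ_x and γ̃_x of F by: Sγ_x = S ∪ {x} if S ∪ {x} ∈ F and Sγ_x = S otherwise; Sγ̃_x = S \ {x} if S \ {x} ∈ F and Sγ̃_x = S otherwise. Let G_F be the family of all these transformations. Then (F, G_F) is a medium (in particular, every γ_x and γ̃_x differs from the identity transformation of F) if and only if F is well-graded. -/
/-!
Each token `γ_x`, `γ̃_x` changes a state in at most the element `x`, so along a message the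
symmetric difference between the first and the last state grows by at most one per step. A
stepwise effective message is concise exactly when it grows by one at every step: a concise message
never touches an element twice, and a message that reaches `|P ∆ Q|` in `|P ∆ Q|` steps cannot
repeat an element, which excludes repeated and mutually reverse tokens. Concise messages are
therefore the shortest paths of well-gradedness, which gives [M1] ⇔ well-graded; for a well-graded
family, such a path from a set without `x` to one with `x` moves `x`, so neither `γ_x` nor `γ̃_x`
is the identity. Axiom [M2] holds for every family: in a closed message every `x` is added as
often as it is removed, and matching the additions of `x` with its removals pairs mutually
reverse tokens.
-/

open scoped Classical symmDiff

universe u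

namespace Media

variable {S : Type u}

/-- The state obtained by applying the message (string of tokens) `m` to the state `s`. -/
def apply (s : S) (m : List (S → S)) : S :=
  m.foldl (fun x τ => τ x) s

/-- The sequence of states `S₀ = s, S₁, …, Sₙ` produced by the message `m` from the state `s`. -/
def produced (s : S) (m : List (S → S)) : List S :=
  m.scanl (fun x τ => τ x) s

/-- `τ'` is a reverse of the token `τ`. -/
def IsReverse (τ τ' : S → S) : Prop :=
  ∀ P Q : S, P ≠ Q → (τ P = Q ↔ τ' Q = P)

/-- The message `m` is stepwise effective for the state `s`. -/
def StepwiseEffective (s : S) (m : List (S → S)) : Prop :=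
  List.Chain' (· ≠ ·) (produced s m)

/-- The message `m` is consistent: it does not contain both a token and its reverse. -/
def Consistent (m : List (S → S)) : Prop :=
  ∀ τ ∈ m, ∀ τ' ∈ m, ¬ IsReverse τ τ'

/-- The message `m` is concise for the state `s`. -/
def Concise (s : S) (m : List (S → S)) : Prop :=
  StepwiseEffective s m ∧ Consistent m ∧ m.Nodup

/-- The message `m` is vacuous: its indices can be partitioned into pairs of
mutually reverse tokens. -/
def Vacuous (m : List (S → S)) : Prop :=
  ∃ f : Fin m.length → Fin m.length, Function.Involutive f ∧
    (∀ i, f i ≠ i) ∧ ∀ i, IsReverse (m.get i) (m.get (f i))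

/-- The message `m` is closed for the state `s`. -/
def Closed (s : S) (m : List (S → S)) : Prop :=
  StepwiseEffective s m ∧ apply s m = s

/-- `(S, T)` is a medium: a token system satisfying axioms [M1] and [M2]. -/
def IsMedium (T : Set (S → S)) : Prop :=
  (∃ a b : S, a ≠ b) ∧ T.Nonempty ∧ (∀ τ ∈ T, τ ≠ id) ∧
  (∀ P Q : S, P ≠ Q →
    ∃ m : List (S → S), (∀ τ ∈ m, τ ∈ T) ∧ Concise P m ∧ apply P m = Q) ∧
  (∀ (P : S) (m : List (S → S)), (∀ τ ∈ m, τ ∈ T) → Closed P m → Vacuous m)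

end Media

namespace Media

variable {X : Type u}

/-- The token `γ_x` adding `x` to a member of the family `F` (when possible). -/
noncomputable def gammaAdd (F : Set (Finset X)) (x : X) : ↥F → ↥F :=
  fun A => if h : insert x (A : Finset X) ∈ F then ⟨insert x (A : Finset X), h⟩ else A

/-- The token `γ̃_x` removing `x` from a member of the family `F` (when possible). -/
noncomputable def gammaRemove (F : Set (Finset X)) (x : X) : ↥F → ↥F :=
  fun A => if h : (A : Finset X).erase x ∈ F then ⟨(A : Finset X).erase x, h⟩ else A

/-- The family `G_F` of all transformations `γ_x`, `γ̃_x` for `x ∈ ∪F \ ∩F`. -/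
def mediumTokens (F : Set (Finset X)) : Set (↥F → ↥F) :=
  {g | ∃ x : X, (∃ A ∈ F, x ∈ A) ∧ (∃ B ∈ F, x ∉ B) ∧
    (g = gammaAdd F x ∨ g = gammaRemove F x)}

/-- A family of finite subsets of `X` is well-graded. -/
def WellGraded (F : Set (Finset X)) : Prop :=
  ∀ A ∈ F, ∀ B ∈ F, A ≠ B →
    ∃ c : ℕ → Finset X,
      c 0 = A ∧ c ((A ∆ B).card) = B ∧
      (∀ i ≤ (A ∆ B).card, c i ∈ F) ∧
      (∀ i, 1 ≤ i → i ≤ (A ∆ B).card → (c (i - 1) ∆ c i).card = 1)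

end Media

open Media

namespace Finset

variable {α : Type*} [DecidableEq α]

lemma card_symmDiff_le_add (s t u : Finset α) : #(s ∆ u) ≤ #(s ∆ t) + #(t ∆ u) :=
  (card_le_card (symmDiff_triangle s t u)).trans (card_union_le _ _)

lemma symmDiff_eq_insert_of_symmDiff_eq_singleton {s t u : Finset α} {x : α} (h : s ∆ t = {x})
    (hx : x ∉ t ∆ u) : s ∆ u = insert x (t ∆ u) := by
  have hsplit : s ∆ u = (s ∆ t) ∆ (t ∆ u) := by
    rw [symmDiff_assoc, symmDiff_symmDiff_cancel_left]
  rw [hsplit, h, insert_eq, symmDiff_eq_union (disjoint_singleton_left.2 hx)]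

lemma eq_insert_of_symmDiff_eq_singleton {s t : Finset α} {x : α} (h : s ∆ t = {x})
    (hx : x ∈ t) : t = insert x s := by
  ext y; have := congrArg (y ∈ ·) h; simp only [mem_symmDiff, mem_singleton] at this; grind

lemma eq_erase_of_symmDiff_eq_singleton {s t : Finset α} {x : α} (h : s ∆ t = {x})
    (hx : x ∉ t) : t = s.erase x := by
  ext y; have := congrArg (y ∈ ·) h; simp only [mem_symmDiff, mem_singleton] at this; grind

end Finset

open Finset

lemma card_rises_eq_card_falls {n : ℕ} (b : ℕ → Prop) [DecidablePred b] (h : b n ↔ b 0) :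
    #{k : Fin n | ¬ b k ∧ b (k + 1)} = #{k : Fin n | b k ∧ ¬ b (k + 1)} := by
  let φ : ℕ → ℤ := fun k => if b k then 1 else 0
  have hterm : ∀ k : ℕ, φ (k + 1) - φ k =
      (if ¬ b k ∧ b (k + 1) then 1 else 0) - (if b k ∧ ¬ b (k + 1) then 1 else 0) := by
    intro k; by_cases b k <;> by_cases b (k + 1) <;> simp_all [φ]
  have htelescope : ∑ k : Fin n, (φ (k + 1) - φ k) = 0 := by
    rw [Fin.sum_univ_eq_sum_range (fun k => φ (k + 1) - φ k), sum_range_sub]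
    simp [φ, h]
  simp only [hterm, sum_sub_distrib, sum_boole, sub_eq_zero] at htelescope
  exact_mod_cast htelescope

lemma exists_involutive_of_card_eq {ι κ : Type*} [Fintype ι] [DecidableEq κ] (lab : ι → κ)
    (p : ι → Prop) [DecidablePred p]
    (hcard : ∀ x, #{i | p i ∧ lab i = x} = #{i | ¬ p i ∧ lab i = x}) :
    ∃ f : ι → ι, Function.Involutive f ∧ ∀ i, lab (f i) = lab i ∧ (p (f i) ↔ ¬ p i) := by
  obtain ⟨e, he⟩ : ∃ e : {i // p i} ≃ {i // ¬ p i}, ∀ a, lab (e a) = lab a := by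
    have hfiber : ∀ x, {a : {i // p i} // lab a = x} ≃ {b : {i // ¬ p i} // lab b = x} :=
      fun x => Fintype.equivOfCardEq <| by
        rw [Fintype.card_congr (Equiv.subtypeSubtypeEquivSubtypeInter p (lab · = x)),
          Fintype.card_congr (Equiv.subtypeSubtypeEquivSubtypeInter (¬ p ·) (lab · = x)),
          Fintype.card_subtype, Fintype.card_subtype, hcard]
    exact ⟨Equiv.ofFiberEquiv hfiber, Equiv.ofFiberEquiv_map hfiber⟩
  refine ⟨fun i => if h : p i then e ⟨i, h⟩ else e.symm ⟨i, h⟩, fun i => ?_, fun i => ?_⟩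
  · by_cases h : p i
    · simp [h, (e ⟨i, h⟩).2]
    · simp [h, (e.symm ⟨i, h⟩).2]
  · by_cases h : p i
    · simp [h, he, (e ⟨i, h⟩).2]
    · simp [h, (e.symm ⟨i, h⟩).2, ← he (e.symm ⟨i, h⟩)]

namespace Media

section Messages

variable {S : Type u}

@[simp] lemma apply_nil (s : S) : apply s [] = s := rfl

@[simp] lemma apply_cons (s : S) (τ : S → S) (m : List (S → S)) :
    apply s (τ :: m) = apply (τ s) m := rfl

lemma apply_take_add_one (s : S) (m : List (S → S)) {k : ℕ} (hk : k < m.length) :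
    apply s (m.take (k + 1)) = m[k] (apply s (m.take k)) := by
  rw [apply, List.take_add_one, List.getElem?_eq_getElem hk]
  simp only [Option.toList_some, List.foldl_append, List.foldl_cons, List.foldl_nil, apply]

lemma stepwiseEffective_iff {s : S} {m : List (S → S)} :
    StepwiseEffective s m ↔ List.IsChain (· ≠ ·) (produced s m) := Iff.rfl

lemma stepwiseEffective_nil (s : S) : StepwiseEffective s [] := List.isChain_singleton s

lemma stepwiseEffective_cons {s : S} {τ : S → S} {m : List (S → S)} :
    StepwiseEffective s (τ :: m) ↔ s ≠ τ s ∧ StepwiseEffective (τ s) m := by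
  rw [stepwiseEffective_iff, stepwiseEffective_iff]
  cases m <;> simp [produced, List.isChain_cons_cons]

lemma StepwiseEffective.apply_take_add_one_ne {s : S} {m : List (S → S)}
    (h : StepwiseEffective s m) {k : ℕ} (hk : k < m.length) :
    apply s (m.take (k + 1)) ≠ apply s (m.take k) := by
  have := List.isChain_iff_getElem.1 h k (by simpa [produced])
  simp only [produced, List.getElem_scanl] at this
  exact this.symm

lemma IsReverse.symm {τ τ' : S → S} (h : IsReverse τ τ') : IsReverse τ' τ :=
  fun P Q hPQ => (h Q P hPQ.symm).symm

lemma IsReverse.ne_id {τ τ' : S → S} (h : IsReverse τ τ') (hτ : τ ≠ id) : τ' ≠ id := by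
  obtain ⟨s, hs⟩ := Function.ne_iff.1 hτ
  intro hτ'
  exact hs (by simpa [hτ'] using (h s (τ s) (Ne.symm hs)).1 rfl)

lemma not_isReverse_self_of_le [PartialOrder S] {τ : S → S}
    (hτ : (∀ a, a ≤ τ a) ∨ ∀ a, τ a ≤ a) {a : S} (ha : τ a ≠ a) : ¬ IsReverse τ τ := by
  intro h
  have hback : τ (τ a) = a := (h a (τ a) (Ne.symm ha)).1 rfl
  rcases hτ with hτ | hτ
  · exact ha (le_antisymm (by simpa [hback] using hτ (τ a)) (hτ a))
  · exact ha (le_antisymm (hτ a) (by simpa [hback] using hτ (τ a)))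

lemma concise_cons {s : S} {τ : S → S} {m : List (S → S)} :
    Concise s (τ :: m) ↔ s ≠ τ s ∧ ¬ IsReverse τ τ ∧ τ ∉ m ∧ (∀ τ' ∈ m, ¬ IsReverse τ τ') ∧
      Concise (τ s) m := by
  simp only [Concise, Consistent, stepwiseEffective_cons, List.nodup_cons, List.mem_cons,
    forall_eq_or_imp]
  constructor
  · rintro ⟨⟨hs, hse⟩, ⟨⟨hττ, hτm⟩, hmτ⟩, hτ, hnd⟩
    exact ⟨hs, hττ, hτ, hτm, hse, fun τ₁ h₁ τ₂ h₂ => (hmτ τ₁ h₁).2 τ₂ h₂, hnd⟩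
  · rintro ⟨hs, hττ, hτ, hτm, hse, hcon, hnd⟩
    exact ⟨⟨hs, hse⟩, ⟨⟨hττ, hτm⟩, fun τ₁ h₁ => ⟨fun h => hτm τ₁ h₁ h.symm, hcon τ₁ h₁⟩⟩, hτ, hnd⟩

lemma exists_message_of_walk {T : Set (S → S)} (n : ℕ) (c : ℕ → S)
    (hc : ∀ i < n, c i ≠ c (i + 1) ∧ ∃ τ ∈ T, τ (c i) = c (i + 1)) :
    ∃ m : List (S → S), (∀ τ ∈ m, τ ∈ T) ∧ m.length = n ∧ StepwiseEffective (c 0) m ∧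
      apply (c 0) m = c n := by
  induction n generalizing c with
  | zero => exact ⟨[], by simp, rfl, stepwiseEffective_nil _, rfl⟩
  | succ n ih =>
    obtain ⟨m, hT, hlen, hse, happ⟩ := ih (fun i => c (i + 1)) fun i hi => hc (i + 1) (by omega)
    obtain ⟨hne, τ, hτ, hτc⟩ := hc 0 n.succ_pos
    refine ⟨τ :: m, List.forall_mem_cons.2 ⟨hτ, hT⟩, by simp [hlen], ?_, by simp [hτc, happ]⟩
    exact stepwiseEffective_cons.2 ⟨hτc ▸ hne, hτc ▸ hse⟩

end Messages

variable {X : Type u} {F : Set (Finset X)}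

lemma le_gammaAdd (x : X) (A : ↥F) : A ≤ gammaAdd F x A := by
  unfold gammaAdd; split_ifs <;> simp [← Subtype.coe_le_coe, subset_insert]

lemma gammaRemove_le (x : X) (A : ↥F) : gammaRemove F x A ≤ A := by
  unfold gammaRemove; split_ifs <;> simp [← Subtype.coe_le_coe, erase_subset]

lemma gammaAdd_eq_iff {x : X} {P Q : ↥F} (hPQ : P ≠ Q) :
    gammaAdd F x P = Q ↔ (Q : Finset X) = insert x ↑P := by
  unfold gammaAdd
  split_ifs with h
  · rw [Subtype.ext_iff, eq_comm]
  · exact iff_of_false hPQ fun hQ => h (hQ ▸ Q.2)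

lemma gammaRemove_eq_iff {x : X} {P Q : ↥F} (hPQ : P ≠ Q) :
    gammaRemove F x P = Q ↔ (Q : Finset X) = (P : Finset X).erase x := by
  unfold gammaRemove
  split_ifs with h
  · rw [Subtype.ext_iff, eq_comm]
  · exact iff_of_false hPQ fun hQ => h (hQ ▸ Q.2)

lemma isReverse_gammaAdd_gammaRemove (x : X) : IsReverse (gammaAdd F x) (gammaRemove F x) := by
  intro P Q hPQ
  have hPQ' : (P : Finset X) ≠ Q := Subtype.coe_injective.ne hPQ
  rw [gammaAdd_eq_iff hPQ, gammaRemove_eq_iff hPQ.symm]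
  grind

lemma exists_mem_mediumTokens_apply_eq {A B : Finset X} (hA : A ∈ F) (hB : B ∈ F)
    (hAB : #(A ∆ B) = 1) : ∃ τ ∈ mediumTokens F, τ ⟨A, hA⟩ = ⟨B, hB⟩ := by
  have hne : (⟨A, hA⟩ : ↥F) ≠ ⟨B, hB⟩ := fun h => by simp_all
  obtain ⟨x, hx⟩ := card_eq_one.1 hAB
  have hxAB : x ∈ A ∆ B := hx ▸ mem_singleton_self x
  rw [mem_symmDiff] at hxAB
  by_cases hxB : x ∈ B
  · have hxA : x ∉ A := by tauto
    obtain rfl := eq_insert_of_symmDiff_eq_singleton hx hxB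
    exact ⟨gammaAdd F x, ⟨x, ⟨_, hB, hxB⟩, ⟨A, hA, hxA⟩, Or.inl rfl⟩, (gammaAdd_eq_iff hne).2 rfl⟩
  · have hxA : x ∈ A := by tauto
    obtain rfl := eq_erase_of_symmDiff_eq_singleton hx hxB
    exact ⟨gammaRemove F x, ⟨x, ⟨A, hA, hxA⟩, ⟨_, hB, hxB⟩, Or.inr rfl⟩,
      (gammaRemove_eq_iff hne).2 rfl⟩

def IsGammaOf (F : Set (Finset X)) (x : X) (τ : ↥F → ↥F) : Prop :=
  τ = gammaAdd F x ∨ τ = gammaRemove F x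

lemma exists_isGammaOf {τ : ↥F → ↥F} (hτ : τ ∈ mediumTokens F) : ∃ x, IsGammaOf F x τ :=
  let ⟨x, _, _, h⟩ := hτ
  ⟨x, h⟩

namespace IsGammaOf

variable {x : X} {τ : ↥F → ↥F}

lemma symmDiff_subset (h : IsGammaOf F x τ) (A : ↥F) : (A : Finset X) ∆ ↑(τ A) ⊆ {x} := by
  intro y
  rcases h with rfl | rfl
  · unfold gammaAdd; split_ifs <;> grind [mem_symmDiff]
  · unfold gammaRemove; split_ifs <;> grind [mem_symmDiff]

lemma symmDiff_eq (h : IsGammaOf F x τ) {A : ↥F} (hA : τ A ≠ A) :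
    (A : Finset X) ∆ ↑(τ A) = {x} :=
  (subset_singleton_iff.1 (h.symmDiff_subset A)).resolve_left fun hempty =>
    hA (Subtype.ext (symmDiff_eq_empty.1 hempty).symm)

lemma eq_ite (h : IsGammaOf F x τ) {A : ↥F} (hA : τ A ≠ A) :
    τ = if x ∈ (A : Finset X) then gammaRemove F x else gammaAdd F x := by
  rcases h with rfl | rfl <;> split_ifs with hx <;> try rfl
  · exact absurd (Subtype.ext (by simp [gammaAdd, hx])) hA
  · exact absurd (Subtype.ext (by simp [gammaRemove, hx])) hA

lemma isReverse_of_ne {τ' : ↥F → ↥F} (h : IsGammaOf F x τ) (h' : IsGammaOf F x τ')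
    (hne : τ ≠ τ') : IsReverse τ τ' := by
  rcases h with rfl | rfl <;> rcases h' with rfl | rfl
  · exact absurd rfl hne
  · exact isReverse_gammaAdd_gammaRemove x
  · exact (isReverse_gammaAdd_gammaRemove x).symm
  · exact absurd rfl hne

lemma not_isReverse_self (h : IsGammaOf F x τ) {A : ↥F} (hA : τ A ≠ A) :
    ¬ IsReverse τ τ := by
  refine not_isReverse_self_of_le ?_ hA
  rcases h with rfl | rfl
  exacts [Or.inl (le_gammaAdd x), Or.inr (gammaRemove_le x)]

end IsGammaOf

lemma card_symmDiff_apply_le_length {m : List (↥F → ↥F)} (htok : ∀ τ ∈ m, τ ∈ mediumTokens F)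
    (s : ↥F) : #((s : Finset X) ∆ ↑(apply s m)) ≤ m.length := by
  induction m generalizing s with
  | nil => simp
  | cons τ m ih =>
    rw [List.forall_mem_cons] at htok
    obtain ⟨x, hx⟩ := exists_isGammaOf htok.1
    calc #((s : Finset X) ∆ ↑(apply s (τ :: m)))
        ≤ #((s : Finset X) ∆ ↑(τ s)) + #((τ s : Finset X) ∆ ↑(apply (τ s) m)) :=
          card_symmDiff_le_add _ _ _
      _ ≤ (τ :: m).length := by
          have := (card_le_card (hx.symmDiff_subset s)).trans (card_singleton x).le
          have := ih htok.2 (τ s)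
          simp only [List.length_cons]; omega

lemma notMem_symmDiff_apply {x : X} {m : List (↥F → ↥F)}
    (hm : ∀ τ ∈ m, ∀ A : ↥F, x ∉ (A : Finset X) ∆ ↑(τ A)) (s : ↥F) :
    x ∉ (s : Finset X) ∆ ↑(apply s m) := by
  induction m generalizing s with
  | nil => simp
  | cons τ m ih =>
    rw [List.forall_mem_cons] at hm
    have := hm.1 s
    have := ih hm.2 (τ s)
    simp only [apply_cons, mem_symmDiff] at *
    tauto

lemma card_symmDiff_apply_of_concise {m : List (↥F → ↥F)} (htok : ∀ τ ∈ m, τ ∈ mediumTokens F)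
    {s : ↥F} (hm : Concise s m) : #((s : Finset X) ∆ ↑(apply s m)) = m.length := by
  induction m generalizing s with
  | nil => simp
  | cons τ m ih =>
    rw [List.forall_mem_cons] at htok
    obtain ⟨hs, -, hτm, hrev, hm'⟩ := concise_cons.1 hm
    obtain ⟨x, hx⟩ := exists_isGammaOf htok.1
    have hfree : ∀ τ' ∈ m, ∀ A : ↥F, x ∉ (A : Finset X) ∆ ↑(τ' A) := by
      intro τ' hτ' A hxA
      obtain ⟨y, hy⟩ := exists_isGammaOf (htok.2 τ' hτ')
      obtain rfl : x = y := mem_singleton.1 (hy.symmDiff_subset A hxA)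
      exact hrev τ' hτ' (hx.isReverse_of_ne hy fun h => hτm (h ▸ hτ'))
    have hxm := notMem_symmDiff_apply hfree (τ s)
    rw [apply_cons, symmDiff_eq_insert_of_symmDiff_eq_singleton (hx.symmDiff_eq (Ne.symm hs)) hxm,
      card_insert_of_notMem hxm, ih htok.2 hm', List.length_cons]

lemma concise_of_card_symmDiff_apply {m : List (↥F → ↥F)} (htok : ∀ τ ∈ m, τ ∈ mediumTokens F)
    {s : ↥F} (hse : StepwiseEffective s m) (hcard : #((s : Finset X) ∆ ↑(apply s m)) = m.length) :
    Concise s m := by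
  suffices h : Concise s m ∧
      ∀ τ ∈ m, ∀ A : ↥F, (A : Finset X) ∆ ↑(τ A) ⊆ (s : Finset X) ∆ ↑(apply s m) from h.1
  induction m generalizing s with
  | nil => simp [Concise, stepwiseEffective_nil, Consistent]
  | cons τ m ih =>
    rw [List.forall_mem_cons] at htok
    obtain ⟨hs, hse'⟩ := stepwiseEffective_cons.1 hse
    obtain ⟨x, hx⟩ := exists_isGammaOf htok.1
    have hsx := hx.symmDiff_eq (Ne.symm hs)
    set D := (τ s : Finset X) ∆ ↑(apply (τ s) m)
    have hxD : x ∉ D := by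
      intro hxD
      have hsub : (s : Finset X) ∆ ↑(apply s (τ :: m)) ⊆ D :=
        (symmDiff_triangle _ _ _).trans (by
          rw [hsx]; exact union_subset (singleton_subset_iff.2 hxD) subset_rfl)
      have := card_le_card hsub
      have : #D ≤ m.length := card_symmDiff_apply_le_length htok.2 (τ s)
      simp only [List.length_cons] at hcard
      omega
    have hins : (s : Finset X) ∆ ↑(apply s (τ :: m)) = insert x D :=
      symmDiff_eq_insert_of_symmDiff_eq_singleton hsx hxD
    obtain ⟨hm, hsub⟩ := ih htok.2 hse' (by
      rw [hins, card_insert_of_notMem hxD, List.length_cons] at hcard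
      exact Nat.succ_injective hcard)
    have hfree : ∀ τ' ∈ m, ∀ A : ↥F, x ∉ (A : Finset X) ∆ ↑(τ' A) :=
      fun τ' hτ' A hxA => hxD (hsub τ' hτ' A hxA)
    refine ⟨concise_cons.2 ⟨hs, hx.not_isReverse_self (Ne.symm hs),
      fun hτ => hfree τ hτ s (by simp [hsx]), fun τ' hτ' hrev => hfree τ' hτ' (τ s) ?_, hm⟩, ?_⟩
    · rw [(hrev s (τ s) hs).1 rfl, symmDiff_comm, hsx]
      exact mem_singleton_self x
    · rw [List.forall_mem_cons, hins]
      exact ⟨fun A => (hx.symmDiff_subset A).trans (by simp),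
        fun τ' hτ' A => (hsub τ' hτ' A).trans (subset_insert x D)⟩

lemma card_symmDiff_apply_take_add_one {m : List (↥F → ↥F)}
    (htok : ∀ τ ∈ m, τ ∈ mediumTokens F) {s : ↥F} (hse : StepwiseEffective s m) {k : ℕ}
    (hk : k < m.length) :
    #((↑(apply s (m.take k)) : Finset X) ∆ ↑(apply s (m.take (k + 1)))) = 1 := by
  obtain ⟨x, hx⟩ := exists_isGammaOf (htok _ (List.getElem_mem hk))
  have hne := hse.apply_take_add_one_ne hk
  rw [apply_take_add_one s m hk] at hne ⊢
  rw [hx.symmDiff_eq hne, card_singleton]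

lemma wellGraded_of_forall_exists_concise
    (h : ∀ P Q : ↥F, P ≠ Q →
      ∃ m : List (↥F → ↥F), (∀ τ ∈ m, τ ∈ mediumTokens F) ∧ Concise P m ∧ apply P m = Q) :
    WellGraded F := by
  intro A hA B hB hAB
  obtain ⟨m, htok, hm, hmB⟩ := h ⟨A, hA⟩ ⟨B, hB⟩ (by simpa using hAB)
  have hlen : #(A ∆ B) = m.length := by simpa [hmB] using card_symmDiff_apply_of_concise htok hm
  refine ⟨fun i => ↑(apply (⟨A, hA⟩ : ↥F) (m.take i)), rfl, by simp [hlen, hmB],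
    fun i _ => Subtype.prop _, fun i hi₁ hi₂ => ?_⟩
  obtain ⟨k, rfl⟩ := Nat.exists_eq_add_one_of_ne_zero (Nat.one_le_iff_ne_zero.1 hi₁)
  simpa using card_symmDiff_apply_take_add_one htok hm.1 (hlen ▸ hi₂)

lemma WellGraded.exists_concise (hF : WellGraded F) (P Q : ↥F) (hPQ : P ≠ Q) :
    ∃ m : List (↥F → ↥F), (∀ τ ∈ m, τ ∈ mediumTokens F) ∧ Concise P m ∧ apply P m = Q := by
  obtain ⟨c, hc0, hcN, hmem, hstep⟩ := hF P P.2 Q Q.2 (Subtype.coe_injective.ne hPQ)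
  set N := #((P : Finset X) ∆ ↑Q)
  let d : ℕ → ↥F := fun i => ⟨c (min i N), hmem _ (min_le_right i N)⟩
  have hd0 : d 0 = P := Subtype.ext (by simp [d, hc0])
  have hdN : d N = Q := Subtype.ext (by simp [d, hcN])
  obtain ⟨m, htok, hlen, hse, happ⟩ := exists_message_of_walk (T := mediumTokens F) N d
    fun i hi => by
      have hcard : #(c i ∆ c (i + 1)) = 1 := by simpa using hstep (i + 1) (by omega) hi
      obtain ⟨τ, hτ, hτd⟩ := exists_mem_mediumTokens_apply_eq (hmem i hi.le) (hmem _ hi) hcard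
      refine ⟨fun h => ?_, τ, hτ, ?_⟩
      · simp [d, min_eq_left hi.le, min_eq_left (show i + 1 ≤ N from hi), Subtype.ext_iff] at h
        simp [h] at hcard
      · simpa [d, min_eq_left hi.le, min_eq_left (show i + 1 ≤ N from hi)] using hτd
  rw [hd0, hdN] at happ
  rw [hd0] at hse
  exact ⟨m, htok, concise_of_card_symmDiff_apply htok hse (by rw [happ, hlen]), happ⟩

lemma WellGraded.ne_id (hF : WellGraded F) {τ : ↥F → ↥F} (hτ : τ ∈ mediumTokens F) :
    τ ≠ id := by
  obtain ⟨x, ⟨A, hA, hxA⟩, ⟨B, hB, hxB⟩, hτx⟩ := hτ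
  obtain ⟨m, htok, -, hmA⟩ :=
    hF.exists_concise ⟨B, hB⟩ ⟨A, hA⟩ fun h => hxB (by rw [Subtype.mk.injEq] at h; rwa [h])
  obtain ⟨τ', hτ'm, C, hxC⟩ : ∃ τ' ∈ m, ∃ C : ↥F, x ∈ (C : Finset X) ∆ ↑(τ' C) := by
    by_contra! h
    exact notMem_symmDiff_apply h ⟨B, hB⟩ (by simp [hmA, mem_symmDiff, hxA, hxB])
  obtain ⟨y, hy⟩ := exists_isGammaOf (htok τ' hτ'm)
  obtain rfl : x = y := mem_singleton.1 (hy.symmDiff_subset C hxC)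
  have hτ'id : τ' ≠ id := fun h => by simp [h] at hxC
  by_cases h : τ = τ'
  · rwa [h]
  · exact (hy.isReverse_of_ne hτx (Ne.symm h)).ne_id hτ'id

lemma vacuous_of_closed {m : List (↥F → ↥F)} (htok : ∀ τ ∈ m, τ ∈ mediumTokens F) {P : ↥F}
    (hm : Closed P m) : Vacuous m := by
  obtain ⟨hse, hP⟩ := hm
  let σ : ℕ → Finset X := fun k => ↑(apply P (m.take k))
  have hstep : ∀ k : Fin m.length, ∃ x, σ k ∆ σ (k + 1) = {x} ∧
      m.get k = if x ∈ σ k then gammaRemove F x else gammaAdd F x := by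
    intro k
    obtain ⟨x, hx⟩ := exists_isGammaOf (htok _ (m.get_mem k))
    have hne := hse.apply_take_add_one_ne k.2
    rw [apply_take_add_one P m k.2] at hne
    exact ⟨x, by simpa [σ, apply_take_add_one P m k.2] using hx.symmDiff_eq hne, hx.eq_ite hne⟩
  choose e he hget using hstep
  have hflip : ∀ x k, e k = x ↔ (x ∈ σ k ↔ x ∉ σ (k + 1)) := by
    intro x k
    rw [eq_comm, ← mem_singleton, ← he k, mem_symmDiff]
    tauto
  have hcard : ∀ x, #{k : Fin m.length | e k ∉ σ k ∧ e k = x} =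
      #{k : Fin m.length | ¬ e k ∉ σ k ∧ e k = x} := by
    intro x
    convert card_rises_eq_card_falls (n := m.length) (fun j => x ∈ σ j) (by simp [σ, hP])
      using 2 <;>
      ext k <;> simp only [mem_filter, mem_univ, true_and] <;> grind
  obtain ⟨f, hf, hfk⟩ := exists_involutive_of_card_eq e (fun k => e k ∉ σ k) hcard
  refine ⟨f, hf, fun k hk => by simpa [hk] using (hfk k).2, fun k => ?_⟩
  obtain ⟨hlab, hp⟩ := hfk k
  rw [hget k, hget (f k), hlab]
  rw [hlab] at hp
  split_ifs with h₁ h₂ h₂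
  · exact absurd h₂ (by tauto)
  · exact (isReverse_gammaAdd_gammaRemove (e k)).symm
  · exact isReverse_gammaAdd_gammaRemove (e k)
  · exact absurd h₂ (by tauto)

lemma mediumTokens_nonempty (hF : ∃ A ∈ F, ∃ B ∈ F, A ≠ B) : (mediumTokens F).Nonempty := by
  obtain ⟨A, hA, B, hB, hAB⟩ := hF
  obtain ⟨x, hx⟩ := symmDiff_nonempty.2 hAB
  rcases mem_symmDiff.1 hx with ⟨hxA, hxB⟩ | ⟨hxB, hxA⟩
  · exact ⟨gammaAdd F x, x, ⟨A, hA, hxA⟩, ⟨B, hB, hxB⟩, Or.inl rfl⟩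
  · exact ⟨gammaAdd F x, x, ⟨B, hB, hxB⟩, ⟨A, hA, hxA⟩, Or.inl rfl⟩

end Media

/-- Theorem 4.1: for a family `F` of (finite) subsets of `X` with `|F| ≥ 2`,
the token system `(F, G_F)` is a medium (in particular, every `γ_x` and `γ̃_x`
differs from the identity transformation of `F`) if and only if `F` is well-graded. -/
theorem isMedium_mediumTokens_iff_wellGraded {X : Type u} (F : Set (Finset X))
    (hF : ∃ A ∈ F, ∃ B ∈ F, A ≠ B) :
    IsMedium (mediumTokens F) ↔ WellGraded F := by
  refine ⟨fun h => wellGraded_of_forall_exists_concise h.2.2.2.1, fun hWG => ?_⟩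
  have hstates : ∃ P Q : ↥F, P ≠ Q :=
    let ⟨A, hA, B, hB, hAB⟩ := hF
    ⟨⟨A, hA⟩, ⟨B, hB⟩, by simpa using hAB⟩
  exact ⟨hstates, mediumTokens_nonempty hF, fun _ => hWG.ne_id, hWG.exists_concise,
    fun _ _ htok hm => vacuous_of_closed htok hm⟩
end

section
/- Let S, V, W be states of a medium (S,T) and suppose V = Sm and W = Vn for concise messages m and n, and S = Wp where p is either a concise message for W or the empty message (so that the concatenation mnp is closed for S). Then every token of T occurs at most once in the message mnp; in particular, for each pair {τ, τ̃} of mutually reverse tokens there is at most one occurrence of that pair in mnp. -/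
open scoped Classical symmDiff

universe u

namespace Media

variable {S : Type u}

/-! By [M2] the closed message `mnp` is vacuous, and its pairing sends the occurrences of a token
`τ` injectively to occurrences of the reverse of `τ`, which is unique. So if some `τ` occurred twice
in `mnp`, then `τ` and `τ̃` would together occur at least four times; but each of the concise
messages `m`, `n`, `p` contains at most one of them. -/

theorem apply_append (s : S) (m n : List (S → S)) :
    apply s (m ++ n) = apply (apply s m) n :=
  List.foldl_append

theorem StepwiseEffective.append {s : S} {m n : List (S → S)} (hm : StepwiseEffective s m)
    (hn : StepwiseEffective (apply s m) n) : StepwiseEffective s (m ++ n) := by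
  induction m generalizing s with
  | nil => exact hn
  | cons τ m ih =>
    unfold StepwiseEffective produced at hm ⊢
    rw [List.scanl_cons, List.Chain', List.isChain_cons] at hm
    rw [List.cons_append, List.scanl_cons, List.Chain', List.isChain_cons]
    refine ⟨?_, ih hm.2 hn⟩
    simpa only [List.head?_scanl] using hm.1

theorem concise_nil (s : S) : Concise s [] :=
  ⟨List.isChain_singleton s, by simp [Consistent], List.nodup_nil⟩

theorem IsReverse.unique {τ τ' τ'' : S → S} (h' : IsReverse τ τ') (h'' : IsReverse τ τ'') :
    τ' = τ'' := by
  funext Q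
  by_cases hQ : τ' Q = Q
  · by_contra hne
    have hQ'' : τ'' Q ≠ Q := fun h => hne (hQ.trans h.symm)
    exact hne ((h' _ Q hQ'').1 ((h'' _ Q hQ'').2 rfl))
  · exact ((h'' _ Q hQ).1 ((h' _ Q hQ).2 rfl)).symm

theorem Consistent.count_add_count_le_one {m : List (S → S)} (hc : Consistent m)
    (hnd : m.Nodup) {τ τ' : S → S} (hr : IsReverse τ τ') : m.count τ + m.count τ' ≤ 1 := by
  have hle := List.nodup_iff_count_le_one.1 hnd
  by_cases hτ : τ ∈ m
  · have hτ' : τ' ∉ m := fun hτ' => hc τ hτ τ' hτ' hr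
    have := hle τ
    rw [List.count_eq_zero.2 hτ']
    omega
  · have := hle τ'
    rw [List.count_eq_zero.2 hτ]
    omega

theorem _root_.List.two_le_count_of_get_eq {α : Type*} [DecidableEq α] {l : List α} {a : α}
    {i j : Fin l.length} (hij : i ≠ j) (hi : l.get i = a) (hj : l.get j = a) : 2 ≤ l.count a := by
  rw [← List.duplicate_iff_two_le_count, List.duplicate_iff_exists_distinct_get]
  rcases lt_or_gt_of_ne hij with h | h
  · exact ⟨i, j, h, hi.symm, hj.symm⟩
  · exact ⟨j, i, h, hj.symm, hi.symm⟩

theorem Vacuous.exists_isReverse_two_le_count {m : List (S → S)} (hm : Vacuous m) {τ : S → S}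
    (hτ : 2 ≤ m.count τ) : ∃ τ', IsReverse τ τ' ∧ 2 ≤ m.count τ' := by
  obtain ⟨f, hf, -, hrev⟩ := hm
  rw [← List.duplicate_iff_two_le_count, List.duplicate_iff_exists_distinct_get] at hτ
  obtain ⟨i, j, hij, rfl, hj⟩ := hτ
  have hfj : m.get (f j) = m.get (f i) := (hj ▸ hrev j).unique (hrev i)
  exact ⟨m.get (f i), hrev i,
    List.two_le_count_of_get_eq (fun h => hij.ne (hf.injective h)) rfl hfj⟩

theorem Vacuous.nodup_of_count_add_count_le_three {m : List (S → S)} (hm : Vacuous m)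
    (hpair : ∀ τ τ', IsReverse τ τ' → m.count τ + m.count τ' ≤ 3) : m.Nodup := by
  refine List.nodup_iff_count_le_one.2 fun τ => ?_
  by_contra! hτ
  obtain ⟨τ', hr, hτ'⟩ := hm.exists_isReverse_two_le_count hτ
  have := hpair τ τ' hr
  omega

end Media

open Media

/-- Lemma 5.5: if `V = Sm`, `W = Vn` for concise messages `m`, `n` and `S = Wp`
where `p` is concise for `W` or empty, then every token occurs at most once in
the closed message `mnp`; in particular, each pair of mutually reverse tokens
occurs at most once in `mnp`. -/
theorem closed_triangle_nodup {S : Type u} {T : Set (S → S)} (hM : IsMedium T)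
    (s v w : S) (m n p : List (S → S))
    (hm : ∀ τ ∈ m, τ ∈ T) (hn : ∀ τ ∈ n, τ ∈ T) (hp : ∀ τ ∈ p, τ ∈ T)
    (hmc : Concise s m) (hsm : apply s m = v)
    (hnc : Concise v n) (hvn : apply v n = w)
    (hpc : p = [] ∨ Concise w p) (hwp : apply w p = s) :
    (m ++ n ++ p).Nodup ∧
    ∀ τ τ' : S → S, IsReverse τ τ' →
      (m ++ n ++ p).count τ ≤ 1 ∧ (m ++ n ++ p).count τ' ≤ 1 := by
  have hpw : Concise w p := hpc.elim (· ▸ concise_nil w) id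
  have hclosed : Closed s (m ++ n ++ p) := by
    refine ⟨(hmc.1.append (hsm ▸ hnc.1)).append ?_, ?_⟩
    · rw [apply_append, hsm, hvn]
      exact hpw.1
    · rw [apply_append, apply_append, hsm, hvn, hwp]
  have hT : ∀ τ ∈ m ++ n ++ p, τ ∈ T := by
    simp only [List.mem_append]
    rintro τ ((h | h) | h)
    exacts [hm τ h, hn τ h, hp τ h]
  have hnodup := (hM.2.2.2.2 s _ hT hclosed).nodup_of_count_add_count_le_three fun τ τ' hr => by
    have := hmc.2.1.count_add_count_le_one hmc.2.2 hr
    have := hnc.2.1.count_add_count_le_one hnc.2.2 hr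
    have := hpw.2.1.count_add_count_le_one hpw.2.2 hr
    simp only [List.count_append]
    omega
  exact ⟨hnodup, fun τ τ' _ => ⟨List.nodup_iff_count_le_one.1 hnodup τ,
    List.nodup_iff_count_le_one.1 hnodup τ'⟩⟩
end

section
/- Let G be a connected bipartite graph with graph distance δ, and let {S,T} and {P,Q} be two distinct edges of G. Then exactly one of the following six cases holds: (1) δ(T,P) = δ(S,Q) = δ(S,P) + 1 = δ(T,Q) − 1; (2) δ(T,P) = δ(S,Q) = δ(S,P) − 1 = δ(T,Q) + 1; (3) δ(S,P) = δ(T,Q) = δ(T,P) + 1 = δ(S,Q) − 1; (4) δ(S,P) = δ(T,Q) = δ(T,P) − 1 = δ(S,Q) + 1; (5) δ(S,P) = δ(T,Q) = δ(T,P) + 1 = δ(S,Q) + 1; (6) δ(S,P) = δ(T,Q) = δ(T,P) − 1 = δ(S,Q) − 1. -/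
/-!
Going around the four-cycle `s, p, t, q` of distances `δ(s,p), δ(t,p), δ(t,q), δ(s,q)`, each step
changes the distance by exactly `±1`: by at most one by the triangle inequality, and not by zero
because in a bipartite graph the distances from a vertex to the two ends of an edge have different
parities. The four steps sum to zero, so exactly two of them are `+1`, and the six ways to choose
them are the six cases.
-/

namespace SimpleGraph

variable {V : Type*} {G : SimpleGraph V}

theorem Colorable.dist_ne_of_adj (hG : G.Colorable 2) {u v w : V} (hadj : G.Adj v w)
    (hreach : G.Reachable u v) : G.dist u v ≠ G.dist u w := by
  intro h
  obtain ⟨p, hp⟩ := hreach.exists_walk_length_eq_dist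
  obtain ⟨q, hq⟩ := (hreach.trans hadj.reachable).exists_walk_length_eq_dist
  have heven := two_colorable_iff_forall_loop_even.mp hG u ((p.concat hadj).append q.reverse)
  rw [Walk.length_append, Walk.length_concat, Walk.length_reverse, hp, hq, ← h] at heven
  exact Nat.not_even_iff_odd.mpr (by simp [parity_simps]) heven

theorem Colorable.dist_eq_dist_add_one_of_adj (hG : G.Colorable 2) {u v w : V}
    (hadj : G.Adj v w) (hreach : G.Reachable u v) :
    G.dist u v = G.dist u w + 1 ∨ G.dist u w = G.dist u v + 1 := by
  grind [Colorable.dist_ne_of_adj, Adj.diff_dist_adj]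

end SimpleGraph

/-- The six cases of the theorem, for `sp = δ(s,p)`, `tp = δ(t,p)`, `sq = δ(s,q)`, `tq = δ(t,q)`. -/
def twoEdgeDistCase (sp tp sq tq : ℤ) : Fin 6 → Prop :=
  ![tp = sq ∧ tp = sp + 1 ∧ tp = tq - 1,
    tp = sq ∧ tp = sp - 1 ∧ tp = tq + 1,
    sp = tq ∧ sp = tp + 1 ∧ sp = sq - 1,
    sp = tq ∧ sp = tp - 1 ∧ sp = sq + 1,
    sp = tq ∧ sp = tp + 1 ∧ sp = sq + 1,
    sp = tq ∧ sp = tp - 1 ∧ sp = sq - 1]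

theorem exists_twoEdgeDistCase {sp tp sq tq : ℤ} (hstp : tp = sp + 1 ∨ sp = tp + 1)
    (hpsq : sq = sp + 1 ∨ sp = sq + 1) (hptq : tq = tp + 1 ∨ tp = tq + 1)
    (hstq : tq = sq + 1 ∨ sq = tq + 1) : ∃ i, twoEdgeDistCase sp tp sq tq i := by
  simp only [twoEdgeDistCase, Fin.exists_fin_succ, Matrix.cons_val_zero, Matrix.cons_val_succ,
    Matrix.cons_val_fin_one, exists_const]
  rcases hstp with _ | _ <;> rcases hpsq with _ | _ <;> rcases hptq with _ | _ <;>
    rcases hstq with _ | _ <;> omega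

theorem twoEdgeDistCase_unique {sp tp sq tq : ℤ} {i j : Fin 6}
    (hi : twoEdgeDistCase sp tp sq tq i) (hj : twoEdgeDistCase sp tp sq tq j) : i = j := by
  fin_cases i <;> fin_cases j <;> first
    | rfl
    | obtain ⟨_, _, _⟩ := hi; obtain ⟨_, _, _⟩ := hj; omega

theorem bipartite_two_edges_six_cases_general {V : Type*} (G : SimpleGraph V)
    (hc : G.Connected) (hb : G.Colorable 2) (s t p q : V)
    (hst : G.Adj s t) (hpq : G.Adj p q) :
    ∃! i : Fin 6,
      (![
        (G.dist t p : ℤ) = G.dist s q ∧ (G.dist t p : ℤ) = G.dist s p + 1 ∧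
          (G.dist t p : ℤ) = G.dist t q - 1,
        (G.dist t p : ℤ) = G.dist s q ∧ (G.dist t p : ℤ) = G.dist s p - 1 ∧
          (G.dist t p : ℤ) = G.dist t q + 1,
        (G.dist s p : ℤ) = G.dist t q ∧ (G.dist s p : ℤ) = G.dist t p + 1 ∧
          (G.dist s p : ℤ) = G.dist s q - 1,
        (G.dist s p : ℤ) = G.dist t q ∧ (G.dist s p : ℤ) = G.dist t p - 1 ∧
          (G.dist s p : ℤ) = G.dist s q + 1,
        (G.dist s p : ℤ) = G.dist t q ∧ (G.dist s p : ℤ) = G.dist t p + 1 ∧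
          (G.dist s p : ℤ) = G.dist s q + 1,
        (G.dist s p : ℤ) = G.dist t q ∧ (G.dist s p : ℤ) = G.dist t p - 1 ∧
          (G.dist s p : ℤ) = G.dist s q - 1] : Fin 6 → Prop) i := by
  have hstp := hb.dist_eq_dist_add_one_of_adj hst (hc.preconnected p s)
  have hstq := hb.dist_eq_dist_add_one_of_adj hst (hc.preconnected q s)
  have hpsq := hb.dist_eq_dist_add_one_of_adj hpq (hc.preconnected s p)
  have hptq := hb.dist_eq_dist_add_one_of_adj hpq (hc.preconnected t p)
  rw [SimpleGraph.dist_comm (u := p), SimpleGraph.dist_comm (u := p)] at hstp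
  rw [SimpleGraph.dist_comm (u := q), SimpleGraph.dist_comm (u := q)] at hstq
  obtain ⟨i, hi⟩ := exists_twoEdgeDistCase (sp := G.dist s p) (tp := G.dist t p)
    (sq := G.dist s q) (tq := G.dist t q) (by omega) (by omega) (by omega) (by omega)
  exact ⟨i, hi, fun j hj => twoEdgeDistCase_unique hj hi⟩

/-- Theorem 6.3: for two distinct edges `{s, t}` and `{p, q}` of a connected
bipartite graph `G`, exactly one of six cases holds for the graph distances. -/
theorem bipartite_two_edges_six_cases {V : Type*} (G : SimpleGraph V)
    (hc : G.Connected) (hb : G.Colorable 2) (s t p q : V)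
    (hst : G.Adj s t) (hpq : G.Adj p q) (hne : s(s, t) ≠ s(p, q)) :
    ∃! i : Fin 6,
      (![
        (G.dist t p : ℤ) = G.dist s q ∧ (G.dist t p : ℤ) = G.dist s p + 1 ∧
          (G.dist t p : ℤ) = G.dist t q - 1,
        (G.dist t p : ℤ) = G.dist s q ∧ (G.dist t p : ℤ) = G.dist s p - 1 ∧
          (G.dist t p : ℤ) = G.dist t q + 1,
        (G.dist s p : ℤ) = G.dist t q ∧ (G.dist s p : ℤ) = G.dist t p + 1 ∧
          (G.dist s p : ℤ) = G.dist s q - 1,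
        (G.dist s p : ℤ) = G.dist t q ∧ (G.dist s p : ℤ) = G.dist t p - 1 ∧
          (G.dist s p : ℤ) = G.dist s q + 1,
        (G.dist s p : ℤ) = G.dist t q ∧ (G.dist s p : ℤ) = G.dist t p + 1 ∧
          (G.dist s p : ℤ) = G.dist s q + 1,
        (G.dist s p : ℤ) = G.dist t q ∧ (G.dist s p : ℤ) = G.dist t p - 1 ∧
          (G.dist s p : ℤ) = G.dist s q - 1] : Fin 6 → Prop) i :=
  bipartite_two_edges_six_cases_general G hc hb s t p q hst hpq
end

section
/- Let G be a connected bipartite graph with graph distance δ. Two distinct edges {S,T} and {P,Q} of G stand in Winkler's relation Θ, defined by {S,T} Θ {P,Q} if and only if δ(S,P) + δ(T,Q) ≠ δ(S,Q) + δ(T,P), if and only if there is no shortest path in G containing both edges {S,T} and {P,Q}. -/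
open SimpleGraph

private lemma edge_pos {V : Type*} {G : SimpleGraph V} {x y : V} :
    ∀ {u v : V} (w : G.Walk u v), s(x, y) ∈ w.edges →
      ∃ i, i < w.length ∧ ((w.getVert i = x ∧ w.getVert (i + 1) = y) ∨
        (w.getVert i = y ∧ w.getVert (i + 1) = x)) := by
  intro u v w
  induction w with
  | nil => simp
  | @cons u u' v hadj q ih =>
    intro h
    rw [SimpleGraph.Walk.edges_cons, List.mem_cons] at h
    rcases h with h | h
    · refine ⟨0, by simp [SimpleGraph.Walk.length_cons], ?_⟩
      have h0 : (SimpleGraph.Walk.cons hadj q).getVert 0 = u := by simp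
      have h1 : (SimpleGraph.Walk.cons hadj q).getVert 1 = u' := by
        rw [SimpleGraph.Walk.getVert_cons_succ]; simp
      rw [Sym2.eq_iff] at h
      rcases h with ⟨hx, hy⟩ | ⟨hx, hy⟩
      · subst hx; subst hy; exact Or.inl ⟨h0, h1⟩
      · subst hx; subst hy; exact Or.inr ⟨h0, h1⟩
    · obtain ⟨i, hi, hcase⟩ := ih h
      refine ⟨i + 1, by simp [SimpleGraph.Walk.length_cons]; omega, ?_⟩
      rw [SimpleGraph.Walk.getVert_cons_succ, SimpleGraph.Walk.getVert_cons_succ]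
      exact hcase

private lemma dist_getVert_le {V : Type*} {G : SimpleGraph V} (hc : G.Connected) :
    ∀ {u v : V} (w : G.Walk u v) (i j : ℕ), i ≤ j → j ≤ w.length →
      G.dist (w.getVert i) (w.getVert j) ≤ j - i := by
  intro u v w
  induction w with
  | nil =>
    intro i j hij hj
    simp only [SimpleGraph.Walk.length_nil, Nat.le_zero] at hj
    subst hj
    interval_cases i
    simp [SimpleGraph.dist_self]
  | @cons u u' v hadj q ih =>
    intro i j hij hj
    match i, j with
    | 0, 0 => simp [SimpleGraph.dist_self]
    | 0, (k+1) =>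
      have h0 : (SimpleGraph.Walk.cons hadj q).getVert 0 = u := by simp
      rw [h0, SimpleGraph.Walk.getVert_cons_succ]
      have hk : k ≤ q.length := by
        simp only [SimpleGraph.Walk.length_cons] at hj; omega
      have h1 : G.dist u u' ≤ 1 := by
        have := SimpleGraph.dist_le hadj.toWalk
        simpa using this
      have h2 : G.dist u' (q.getVert k) ≤ k := by
        have := ih 0 k (Nat.zero_le _) hk
        simpa using this
      calc G.dist u (q.getVert k) ≤ G.dist u u' + G.dist u' (q.getVert k) :=
            hc.dist_triangle
        _ ≤ 1 + k := by omega
        _ = k + 1 - 0 := by omega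
    | (i'+1), (j'+1) =>
      rw [SimpleGraph.Walk.getVert_cons_succ, SimpleGraph.Walk.getVert_cons_succ]
      have := ih i' j' (by omega) (by simp only [SimpleGraph.Walk.length_cons] at hj; omega)
      omega

private lemma dist_getVert_eq {V : Type*} {G : SimpleGraph V} (hc : G.Connected)
    {a b : V} (w : G.Walk a b) (hw : w.length = G.dist a b) (k l : ℕ)
    (hk : k ≤ w.length) (hl : l ≤ w.length) :
    G.dist (w.getVert k) (w.getVert l) = (k - l) + (l - k) := by
  have key : ∀ k l : ℕ, k ≤ l → l ≤ w.length →
      G.dist (w.getVert k) (w.getVert l) = l - k := by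
    intro k l hkl hl
    have hle := dist_getVert_le hc w k l hkl hl
    have h1 : G.dist a (w.getVert k) ≤ k := by
      have := dist_getVert_le hc w 0 k (Nat.zero_le _) (le_trans hkl hl)
      simpa [SimpleGraph.Walk.getVert_zero] using this
    have h2 : G.dist (w.getVert l) b ≤ w.length - l := by
      have := dist_getVert_le hc w l w.length hl le_rfl
      simpa [SimpleGraph.Walk.getVert_length] using this
    have h3 : G.dist a b ≤ G.dist a (w.getVert k) + G.dist (w.getVert k) b :=
      hc.dist_triangle
    have h4 : G.dist (w.getVert k) b ≤
        G.dist (w.getVert k) (w.getVert l) + G.dist (w.getVert l) b :=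
      hc.dist_triangle
    omega
  rcases le_total k l with h | h
  · rw [key k l h hl]; omega
  · rw [SimpleGraph.dist_comm, key l k h hk]; omega

private lemma walk_parity {V : Type*} {G : SimpleGraph V} (c : G.Coloring (ZMod 2)) :
    ∀ {u v : V} (w : G.Walk u v), c v = c u + (w.length : ZMod 2) := by
  intro u v w
  induction w with
  | nil => simp
  | @cons u u' v hadj q ih =>
    have hne : c u ≠ c u' := c.valid hadj
    have h1 : c u' = c u + 1 := by
      revert hne; generalize c u = x; generalize c u' = y; revert x y; decide
    rw [ih, h1, SimpleGraph.Walk.length_cons]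
    push_cast
    ring

private lemma nbr_dist {V : Type*} {G : SimpleGraph V} (hc : G.Connected)
    (hb : G.Colorable 2) {x y : V} (hxy : G.Adj x y) (v : V) :
    G.dist x v = G.dist y v + 1 ∨ G.dist y v = G.dist x v + 1 := by
  obtain ⟨c⟩ := hb
  set f : Fin 2 → ZMod 2 := fun i => (i.val : ZMod 2) with hf
  have hfinj : Function.Injective f := by decide
  let c2 : G.Coloring (ZMod 2) :=
    SimpleGraph.Coloring.mk (fun v => f (c v)) (fun hadj h => c.valid hadj (hfinj h))
  obtain ⟨wx, hwx⟩ := hc.exists_walk_length_eq_dist x v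
  obtain ⟨wy, hwy⟩ := hc.exists_walk_length_eq_dist y v
  have px := walk_parity c2 wx
  have py := walk_parity c2 wy
  rw [hwx] at px
  rw [hwy] at py
  have hcne : c2 x ≠ c2 y := c2.valid hxy
  have hmod : ¬ ((G.dist x v : ZMod 2) = (G.dist y v : ZMod 2)) := by
    intro h
    apply hcne
    have : c2 x + (G.dist x v : ZMod 2) = c2 y + (G.dist y v : ZMod 2) := by
      rw [← px, ← py]
    rw [h] at this
    exact add_right_cancel this
  rw [ZMod.natCast_eq_natCast_iff] at hmod
  have hmod2 : ¬ (G.dist x v % 2 = G.dist y v % 2) := hmod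
  have ht1 : G.dist x v ≤ G.dist y v + 1 := by
    have h1 : G.dist x y ≤ 1 := by simpa using SimpleGraph.dist_le hxy.toWalk
    have := hc.dist_triangle (u := x) (v := y) (w := v)
    omega
  have ht2 : G.dist y v ≤ G.dist x v + 1 := by
    have h1 : G.dist y x ≤ 1 := by simpa using SimpleGraph.dist_le hxy.symm.toWalk
    have := hc.dist_triangle (u := y) (v := x) (w := v)
    omega
  omega

/-- Theorem 6.4: two distinct edges `{s, t}` and `{p, q}` of a connected
bipartite graph stand in Winkler's relation `Θ`, i.e.
`δ(s, p) + δ(t, q) ≠ δ(s, q) + δ(t, p)`, if and only if they do not both belong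
to some shortest path of the graph. -/
theorem winkler_iff_no_common_shortest_path {V : Type*} (G : SimpleGraph V)
    (hc : G.Connected) (hb : G.Colorable 2) (s t p q : V)
    (hst : G.Adj s t) (hpq : G.Adj p q) (hne : s(s, t) ≠ s(p, q)) :
    (G.dist s p + G.dist t q ≠ G.dist s q + G.dist t p) ↔
      ¬ ∃ (a b : V) (w : G.Walk a b), w.length = G.dist a b ∧
        s(s, t) ∈ w.edges ∧ s(p, q) ∈ w.edges := by
  rw [← not_iff_not, not_ne_iff, not_not]
  constructor
  · -- equality → exists shortest walk containing both edges
    intro h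
    have hA := nbr_dist hc hb hst p
    have hB := nbr_dist hc hb hst q
    have hD' := nbr_dist hc hb hpq t
    have hD : G.dist t p = G.dist t q + 1 ∨ G.dist t q = G.dist t p + 1 := by
      rwa [show G.dist p t = G.dist t p from SimpleGraph.dist_comm,
        show G.dist q t = G.dist t q from SimpleGraph.dist_comm] at hD'
    rcases hA with hA | hA
    · rcases hD with hD | hD
      · -- dist s p = dist t q + 2 : walk s → t → ⋯ → q → p
        obtain ⟨wtq, hwtq⟩ := hc.exists_walk_length_eq_dist t q
        refine ⟨s, p, SimpleGraph.Walk.cons hst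
          (wtq.append (SimpleGraph.Walk.cons hpq.symm SimpleGraph.Walk.nil)), ?_, ?_, ?_⟩
        · simp only [SimpleGraph.Walk.length_cons, SimpleGraph.Walk.length_append,
            SimpleGraph.Walk.length_nil, hwtq]
          omega
        · simp
        · simp [Sym2.eq_swap]
      · -- dist s q = dist t p + 2 : walk s → t → ⋯ → p → q
        obtain ⟨wtp, hwtp⟩ := hc.exists_walk_length_eq_dist t p
        refine ⟨s, q, SimpleGraph.Walk.cons hst
          (wtp.append (SimpleGraph.Walk.cons hpq SimpleGraph.Walk.nil)), ?_, ?_, ?_⟩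
        · simp only [SimpleGraph.Walk.length_cons, SimpleGraph.Walk.length_append,
            SimpleGraph.Walk.length_nil, hwtp]
          omega
        · simp
        · simp
    · rcases hD with hD | hD
      · -- dist t p = dist s q + 2 : walk t → s → ⋯ → q → p
        obtain ⟨wsq, hwsq⟩ := hc.exists_walk_length_eq_dist s q
        refine ⟨t, p, SimpleGraph.Walk.cons hst.symm
          (wsq.append (SimpleGraph.Walk.cons hpq.symm SimpleGraph.Walk.nil)), ?_, ?_, ?_⟩
        · simp only [SimpleGraph.Walk.length_cons, SimpleGraph.Walk.length_append,
            SimpleGraph.Walk.length_nil, hwsq]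
          omega
        · simp [Sym2.eq_swap]
        · simp [Sym2.eq_swap]
      · -- dist t q = dist s p + 2 : walk t → s → ⋯ → p → q
        obtain ⟨wsp, hwsp⟩ := hc.exists_walk_length_eq_dist s p
        refine ⟨t, q, SimpleGraph.Walk.cons hst.symm
          (wsp.append (SimpleGraph.Walk.cons hpq SimpleGraph.Walk.nil)), ?_, ?_, ?_⟩
        · simp only [SimpleGraph.Walk.length_cons, SimpleGraph.Walk.length_append,
            SimpleGraph.Walk.length_nil, hwsp]
          omega
        · simp [Sym2.eq_swap]
        · simp
  · -- exists shortest walk containing both edges → equality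
    rintro ⟨a, b, w, hw, he1, he2⟩
    obtain ⟨i, hi, hcase1⟩ := edge_pos w he1
    obtain ⟨j, hj, hcase2⟩ := edge_pos w he2
    have hij : i ≠ j := by
      intro hij
      subst hij
      apply hne
      rcases hcase1 with ⟨h1, h2⟩ | ⟨h1, h2⟩ <;> rcases hcase2 with ⟨h3, h4⟩ | ⟨h3, h4⟩ <;>
        rw [← h1, ← h2, ← h3, ← h4] <;> simp [Sym2.eq_swap]
    have D : ∀ k l : ℕ, k ≤ w.length → l ≤ w.length →
        G.dist (w.getVert k) (w.getVert l) = (k - l) + (l - k) :=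
      fun k l hk hl => dist_getVert_eq hc w hw k l hk hl
    rcases hcase1 with ⟨h1, h2⟩ | ⟨h1, h2⟩ <;> rcases hcase2 with ⟨h3, h4⟩ | ⟨h3, h4⟩ <;>
      rw [← h1, ← h2, ← h3, ← h4] <;>
      rw [D _ _ (by omega) (by omega), D _ _ (by omega) (by omega),
        D _ _ (by omega) (by omega), D _ _ (by omega) (by omega)] <;>
      omega
end

section
/- A connected graph G = (V,E) is a partial cube if and only if its edges can be labeled by elements of some set J such that: (i) the edges of any shortest path of G have pairwise different labels, and (ii) in each closed walk of G every label appears an even number of times. -/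
open scoped Classical symmDiff

universe u

namespace Media

/-- The cube `H(X)`: vertices are the finite subsets of `X`, two subsets being
adjacent iff their symmetric difference has exactly one element. -/
noncomputable def cubeGraph (X : Type u) : SimpleGraph (Finset X) where
  Adj A B := (A ∆ B).card = 1
  symm := by
    constructor
    intro A B h
    rwa [symmDiff_comm]
  loopless := by
    constructor
    intro A h
    simp [symmDiff_self] at h

/-- A partial cube: a connected graph admitting an isometric embedding into
some cube `H(X)`. -/
def IsPartialCube {V : Type u} (G : SimpleGraph V) : Prop :=
  G.Connected ∧ ∃ (X : Type u) (f : V → Finset X),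
    ∀ u v : V, (cubeGraph X).dist (f u) (f v) = G.dist u v

end Media

open Media

/-
An isometric embedding `f` into a cube labels each edge `uv` by the singleton `f u ∆ f v`; along
any walk from `a` to `b` a coordinate `x` is flipped an odd number of times iff `x ∈ f a ∆ f b`,
which gives evenness on closed walks, and on a shortest walk the `#(f a ∆ f b) = length` flipped
coordinates must all be distinct. Conversely, given a labeling, fix a base vertex `v₀` and send `v`
to the set of labels occurring an odd number of times on a fixed walk from `v₀` to `v`. Condition
(ii), applied to the closed walk through `v₀`, `u` and `v`, shows that `f u ∆ f v` is the set of
labels occurring oddly on any walk from `u` to `v`; on a shortest walk these are, by (i), all its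
labels, one per edge.
-/

namespace Media

open Finset SimpleGraph

variable {V X J : Type u} {G : SimpleGraph V}

noncomputable def edgeFlip (f : V → Finset X) : Sym2 V → Finset X :=
  Sym2.lift ⟨fun u v => f u ∆ f v, fun u v => symmDiff_comm (f u) (f v)⟩

@[simp]
lemma edgeFlip_mk (f : V → Finset X) (u v : V) : edgeFlip f s(u, v) = f u ∆ f v := rfl

lemma card_edgeFlip_of_mem_edges (φ : G →g cubeGraph X) {a b : V} (p : G.Walk a b)
    {e : Sym2 V} (he : e ∈ p.edges) : #(edgeFlip φ e) = 1 := by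
  induction e using Sym2.ind with
  | _ u v => exact φ.map_adj (p.adj_of_mem_edges he)

lemma odd_count_edgeFlip_iff (φ : G →g cubeGraph X) {a b : V} (p : G.Walk a b) (x : X) :
    Odd ((p.edges.map (edgeFlip φ)).count {x}) ↔ x ∈ φ a ∆ φ b := by
  induction p with
  | nil => simp
  | @cons a c b hac q ih =>
    obtain ⟨y, hy⟩ := card_eq_one.mp (φ.map_adj hac)
    have hsplit : φ a ∆ φ b = (φ a ∆ φ c) ∆ (φ c ∆ φ b) := by
      rw [symmDiff_assoc, symmDiff_symmDiff_cancel_left]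
    rw [Walk.edges_cons, List.map_cons, List.count_cons, edgeFlip_mk, hy, hsplit,
      mem_symmDiff, hy, mem_singleton, Nat.odd_add, ih]
    by_cases hxy : x = y <;> simp [hxy, singleton_inj, Ne.symm]

lemma card_symmDiff_le_card_toFinset_edgeFlip (φ : G →g cubeGraph X) {a b : V}
    (p : G.Walk a b) : #(φ a ∆ φ b) ≤ #(p.edges.map (edgeFlip φ)).toFinset := by
  refine card_le_card_of_injOn (fun x => {x}) (fun x hx => ?_) singleton_injective.injOn
  have hodd := (odd_count_edgeFlip_iff φ p x).mpr hx
  exact List.mem_toFinset.mpr (List.count_pos_iff.mp hodd.pos)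

lemma card_symmDiff_le_length (φ : G →g cubeGraph X) {a b : V} (p : G.Walk a b) :
    #(φ a ∆ φ b) ≤ p.length :=
  calc #(φ a ∆ φ b) ≤ #(p.edges.map (edgeFlip φ)).toFinset :=
        card_symmDiff_le_card_toFinset_edgeFlip φ p
    _ ≤ p.length := by simpa using List.toFinset_card_le (p.edges.map (edgeFlip φ))

lemma exists_cubeGraph_walk_symmDiff (A S : Finset X) :
    ∃ p : (cubeGraph X).Walk A (A ∆ S), p.length = #S := by
  induction S using Finset.induction_on with
  | empty => exact ⟨Walk.nil.copy rfl (symmDiff_bot A).symm, by simp⟩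
  | @insert x S hx ih =>
    obtain ⟨p, hp⟩ := ih
    have hins : A ∆ insert x S = A ∆ S ∆ {x} := by
      rw [insert_eq, ← sup_eq_union, ← (disjoint_singleton_left.mpr hx).symmDiff_eq_sup,
        symmDiff_comm {x} S, symmDiff_assoc]
    have hadj : (cubeGraph X).Adj (A ∆ S) (A ∆ insert x S) := by
      show #((A ∆ S) ∆ (A ∆ insert x S)) = 1
      rw [hins, symmDiff_symmDiff_cancel_left, card_singleton]
    exact ⟨p.concat hadj, by rw [Walk.length_concat, hp, card_insert_of_notMem hx]⟩

lemma cubeGraph_dist (A B : Finset X) : (cubeGraph X).dist A B = #(A ∆ B) := by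
  have hwalk := exists_cubeGraph_walk_symmDiff A (A ∆ B)
  rw [symmDiff_symmDiff_cancel_left] at hwalk
  obtain ⟨p, hp⟩ := hwalk
  refine le_antisymm (hp ▸ dist_le p) ?_
  obtain ⟨q, hq⟩ := p.reachable.exists_walk_length_eq_dist
  exact hq ▸ card_symmDiff_le_length Hom.id q

def homOfDistEq (f : V → Finset X)
    (hf : ∀ u v, (cubeGraph X).dist (f u) (f v) = G.dist u v) : G →g cubeGraph X where
  toFun := f
  map_rel' {u v} h := by rwa [← dist_eq_one_iff_adj, hf, dist_eq_one_iff_adj]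

lemma nodup_edgeFlip_of_length_eq_dist (φ : G →g cubeGraph X)
    (hφ : ∀ u v, (cubeGraph X).dist (φ u) (φ v) = G.dist u v) {a b : V} (p : G.Walk a b)
    (hp : p.length = G.dist a b) : (p.edges.map (edgeFlip φ)).Nodup := by
  set L := p.edges.map (edgeFlip φ)
  refine Multiset.toFinset_card_eq_card_iff_nodup.mp (le_antisymm (List.toFinset_card_le L) ?_)
  calc L.length = #(φ a ∆ φ b) := by
        rw [List.length_map, Walk.length_edges, hp, ← hφ, cubeGraph_dist]
    _ ≤ #L.toFinset := card_symmDiff_le_card_toFinset_edgeFlip φ p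

lemma even_count_edgeFlip (φ : G →g cubeGraph X) {a : V} (p : G.Walk a a) (j : Finset X) :
    Even ((p.edges.map (edgeFlip φ)).count j) := by
  by_cases hj : j ∈ p.edges.map (edgeFlip φ)
  · obtain ⟨e, he, rfl⟩ := List.mem_map.mp hj
    obtain ⟨x, hx⟩ := card_eq_one.mp (card_edgeFlip_of_mem_edges φ p he)
    rw [hx, ← Nat.not_odd_iff_even, odd_count_edgeFlip_iff, symmDiff_self]
    exact notMem_empty x
  · rw [List.count_eq_zero.mpr hj]
    exact Even.zero

noncomputable def oddLabels (L : List J) : Finset J :=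
  L.toFinset.filter fun j => Odd (L.count j)

lemma mem_oddLabels {L : List J} {j : J} : j ∈ oddLabels L ↔ Odd (L.count j) := by
  simp only [oddLabels, mem_filter, List.mem_toFinset, and_iff_right_iff_imp]
  exact fun h => List.count_pos_iff.mp h.pos

lemma oddLabels_eq_toFinset {L : List J} (hL : L.Nodup) : oddLabels L = L.toFinset := by
  ext j
  rw [mem_oddLabels, List.mem_toFinset]
  exact ⟨fun h => List.count_pos_iff.mp h.pos,
    fun h => (List.count_eq_one_of_mem hL h).symm ▸ odd_one⟩

noncomputable def labelParity (hc : G.Preconnected) (l : Sym2 V → J) (v₀ v : V) : Finset J :=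
  oddLabels ((hc v₀ v).some.edges.map l)

lemma symmDiff_labelParity (hc : G.Preconnected) (l : Sym2 V → J)
    (heven : ∀ (a : V) (w : G.Walk a a) (j : J), Even ((w.edges.map l).count j))
    (v₀ : V) {u v : V} (p : G.Walk u v) :
    labelParity hc l v₀ u ∆ labelParity hc l v₀ v = oddLabels (p.edges.map l) := by
  ext j
  have hloop := heven v₀
    (((hc v₀ u).some.append p).append (hc v₀ v).some.reverse) j
  simp only [Walk.edges_append, Walk.edges_reverse, List.map_append, List.map_reverse,
    List.count_append, List.count_reverse] at hloop
  rw [mem_symmDiff, labelParity, labelParity, mem_oddLabels, mem_oddLabels, mem_oddLabels]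
  rw [Nat.even_iff] at hloop
  simp only [Nat.odd_iff]
  omega

lemma isPartialCube_of_labeling (hc : G.Connected) (l : Sym2 V → J)
    (hnodup : ∀ (a b : V) (w : G.Walk a b), w.length = G.dist a b → (w.edges.map l).Nodup)
    (heven : ∀ (a : V) (w : G.Walk a a) (j : J), Even ((w.edges.map l).count j)) :
    IsPartialCube G := by
  obtain ⟨v₀⟩ := hc.nonempty
  refine ⟨hc, J, labelParity hc.preconnected l v₀, fun u v => ?_⟩
  obtain ⟨p, hp⟩ := hc.exists_walk_length_eq_dist u v
  have hL := hnodup u v p hp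
  rw [cubeGraph_dist, symmDiff_labelParity hc.preconnected l heven v₀ p, oddLabels_eq_toFinset hL,
    List.toFinset_card_of_nodup hL, List.length_map, Walk.length_edges, hp]

end Media

/-- Theorem 6.6: a connected graph `G` is a partial cube if and only if its
edges can be labeled by elements of some set `J` so that (i) edges of any
shortest path of `G` have pairwise different labels, and (ii) in each closed
walk of `G` every label appears an even number of times. -/
theorem isPartialCube_iff_labeling {V : Type u} (G : SimpleGraph V)
    (hc : G.Connected) :
    IsPartialCube G ↔
      ∃ (J : Type u) (l : Sym2 V → J),
        (∀ (a b : V) (w : G.Walk a b), w.length = G.dist a b →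
          (w.edges.map l).Nodup) ∧
        (∀ (a : V) (w : G.Walk a a) (j : J),
          Even ((w.edges.map l).count j)) := by
  refine ⟨fun ⟨_, X, f, hf⟩ => ?_, fun ⟨J, l, hnodup, heven⟩ =>
    isPartialCube_of_labeling hc l hnodup heven⟩
  let φ := homOfDistEq f hf
  -- `count` in the statement compares labels with the classical `DecidableEq (Finset X)`.
  exact ⟨Finset X, edgeFlip φ, fun _ _ p hp => nodup_edgeFlip_of_length_eq_dist φ hf p hp,
    fun _ p j => by convert even_count_edgeFlip φ p j⟩
end
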